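/- arXiv:2203.01718 — 3 statements merged into one kernel-verified Lean document; each statement's English description precedes it below -/
import Mathlib

section
/- Let K, T ⊂ ℝ^n be convex bodies, where T is additionally strictly convex and smooth. Let q = (q_1,...,q_m) be a closed (K,T)-Minkowski billiard trajectory with closed dual billiard trajectory p = (p_1,...,p_m) in T. Then p is a closed (T,−K)-Minkowski billiard trajectory with −q^{+1} := (−q_2,...,−q_m,−q_1) as its closed dual billiard trajectory on −K. -/
open scoped RealInnerProductSpace
open MeasureTheory Filter Metric

noncomputable section

/-- `ℝ^n` as a Euclidean space. -/
abbrev Evec (n : ℕ) : Type := EuclideanSpace ℝ (Fin n)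

/-- `ℝ^{2n} = ℝ^n_q × ℝ^n_p` as a Euclidean space. -/
abbrev E2vec (n : ℕ) : Type := EuclideanSpace ℝ (Fin n ⊕ Fin n)

/-- A convex body: a compact convex set with the origin in its interior. -/
def IsConvexBody {n : ℕ} (K : Set (Evec n)) : Prop :=
  IsCompact K ∧ Convex ℝ K ∧ 0 ∈ interior K

/-- A convex polytope: the convex hull of finitely many points. -/
def IsPolytope {n : ℕ} (K : Set (Evec n)) : Prop :=
  ∃ s : Finset (Evec n), K = convexHull ℝ (s : Set (Evec n))

/-- The polar body `T° = {x : ⟨x,y⟩ ≤ 1 ∀ y ∈ T}`. -/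
def polarSet {n : ℕ} (T : Set (Evec n)) : Set (Evec n) :=
  {x | ∀ y ∈ T, ⟪x, y⟫ ≤ 1}

/-- The outer normal cone `N_T(p)`. -/
def outerNormalCone {n : ℕ} (T : Set (Evec n)) (p : Evec n) : Set (Evec n) :=
  {u | ∀ y ∈ T, ⟪u, y - p⟫ ≤ 0}

/-- A body is smooth if through every boundary point there is a unique supporting
hyperplane, i.e. a unique unit outer normal vector. -/
def IsSmoothBody {n : ℕ} (T : Set (Evec n)) : Prop :=
  ∀ z ∈ frontier T, ∀ u ∈ outerNormalCone T z, ∀ v ∈ outerNormalCone T z,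
    ‖u‖ = 1 → ‖v‖ = 1 → u = v

/-- Closed polygonal curve with `m` cyclically indexed vertices: consecutive vertices are
distinct and no vertex lies on the segment joining its neighbours. -/
def IsClosedPolygonal {n : ℕ} (m : ℕ) (q : ZMod m → Evec n) : Prop :=
  2 ≤ m ∧ (∀ j, q (j + 1) ≠ q j) ∧ ∀ j, q j ∉ segment ℝ (q (j - 1)) (q (j + 1))

/-- The `ℓ_T`-length of a closed polygonal curve: `Σ_j μ_{T°}(q_{j+1} - q_j)`. -/
def ellLen {n : ℕ} (T : Set (Evec n)) : (m : ℕ) → (ZMod m → Evec n) → ℝ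
  | 0, _ => 0
  | (m + 1), q => ∑ j : ZMod (m + 1), gauge (polarSet T) (q (j + 1) - q j)

/-- `q` is a closed (strong) `(K,T)`-Minkowski billiard trajectory with dual trajectory `p`. -/
def IsBilliardPair {n : ℕ} (K T : Set (Evec n)) (m : ℕ) (q p : ZMod m → Evec n) : Prop :=
  IsClosedPolygonal m q ∧ (∀ j, q j ∈ frontier K) ∧ (∀ j, p j ∈ frontier T) ∧
    ∀ j, q (j + 1) - q j ∈ outerNormalCone T (p j) ∧
      -(p (j + 1) - p j) ∈ outerNormalCone K (q (j + 1))

/-- `q` is a closed (strong) `(K,T)`-Minkowski billiard trajectory. -/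
def IsClosedTrajectory {n : ℕ} (K T : Set (Evec n)) (m : ℕ) (q : ZMod m → Evec n) : Prop :=
  ∃ p, IsBilliardPair K T m q p

/-- `q` is an `ℓ_T`-minimizing closed `(K,T)`-Minkowski billiard trajectory. -/
def IsMinTrajectory {n : ℕ} (K T : Set (Evec n)) (m : ℕ) (q : ZMod m → Evec n) : Prop :=
  IsClosedTrajectory K T m q ∧
    ∀ (m' : ℕ) (q' : ZMod m' → Evec n), IsClosedTrajectory K T m' q' →
      ellLen T m q ≤ ellLen T m' q'

/-- Membership in `F^cp_{n+1}(K)`: a closed polygonal curve with at most `n+1` vertices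
that cannot be translated into the interior of `K`. -/
def InFcp {n : ℕ} (K : Set (Evec n)) (m : ℕ) (q : ZMod m → Evec n) : Prop :=
  IsClosedPolygonal m q ∧ m ≤ n + 1 ∧ ∀ v : Evec n, ∃ j, q j + v ∉ interior K

/-- The set of values `ℓ_T(q)` for `q ∈ F^cp_{n+1}(K)`. -/
def FcpVals {n : ℕ} (K T : Set (Evec n)) : Set ℝ :=
  {v | ∃ (m : ℕ) (q : ZMod m → Evec n), InFcp K m q ∧ ellLen T m q = v}

/-- The set of values `ℓ_T(q)` for `q ∈ M_{n+1}(K,T)`, the closed `(K,T)`-Minkowski billiard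
trajectories with at most `n+1` bouncing points. -/
def MVals {n : ℕ} (K T : Set (Evec n)) : Set ℝ :=
  {v | ∃ (m : ℕ) (q : ZMod m → Evec n),
    m ≤ n + 1 ∧ IsClosedTrajectory K T m q ∧ ellLen T m q = v}

/-- The set of values `ℓ_T(q)` over all closed `(K,T)`-Minkowski billiard trajectories. -/
def TrajVals {n : ℕ} (K T : Set (Evec n)) : Set ℝ :=
  {v | ∃ (m : ℕ) (q : ZMod m → Evec n), IsClosedTrajectory K T m q ∧ ellLen T m q = v}

/-- A closed polygonal curve viewed as a compact subset of `ℝ^n`. -/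
def curveSet {n : ℕ} (m : ℕ) (q : ZMod m → Evec n) : Set (Evec n) :=
  ⋃ j : ZMod m, segment ℝ (q j) (q (j + 1))

/-- The `q`-part of a point of `ℝ^{2n}`. -/
def qPart {n : ℕ} (x : E2vec n) : Evec n := WithLp.toLp 2 (fun i => x (Sum.inl i))

/-- The `p`-part of a point of `ℝ^{2n}`. -/
def pPart {n : ℕ} (x : E2vec n) : Evec n := WithLp.toLp 2 (fun i => x (Sum.inr i))

/-- The point `(a, b)` of `ℝ^{2n}`. -/
def prodPt {n : ℕ} (a b : Evec n) : E2vec n := WithLp.toLp 2 (Sum.elim a b)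

/-- The Lagrangian product `K × T ⊂ ℝ^n_q × ℝ^n_p`. -/
def lagProd {n : ℕ} (K T : Set (Evec n)) : Set (E2vec n) :=
  {x | qPart x ∈ K ∧ pPart x ∈ T}

/-- The standard symplectic matrix: `J(q, p) = (p, -q)`. -/
def symJ {n : ℕ} (x : E2vec n) : E2vec n := prodPt (pPart x) (-qPart x)

/-- The Hamiltonian `H_C = ½ μ_C²` where `μ_C` is the Minkowski functional (gauge) of `C`. -/
def Ham {V : Type*} [AddCommGroup V] [Module ℝ V] (C : Set V) (x : V) : ℝ :=
  (1 / 2) * gauge C x ^ 2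

/-- The convex subdifferential of `f` at `x`. -/
def subdiff {V : Type*} [NormedAddCommGroup V] [InnerProductSpace ℝ V]
    (f : V → ℝ) (x : V) : Set V :=
  {v | ∀ y, f x + ⟪v, y - x⟫ ≤ f y}

/-- A closed characteristic on `∂C`: an absolutely continuous 1-periodic loop
(encoded as the indefinite integral of a locally integrable derivative `x'`) with
`H_C ∘ x ≡ ½` and `x'(t) ∈ J ∂H_C(x(t))` for almost every `t`. -/
structure ClosedCharacteristic (n : ℕ) (C : Set (E2vec n)) where
  x : ℝ → E2vec n
  x' : ℝ → E2vec n
  periodic : Function.Periodic x 1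
  periodic' : Function.Periodic x' 1
  integrable : IntegrableOn x' (Set.Icc (0 : ℝ) 1)
  eq_integral : ∀ t : ℝ, x t = x 0 + ∫ s in (0 : ℝ)..t, x' s
  energy : ∀ t : ℝ, Ham C (x t) = 1 / 2
  mem_incl : ∀ᵐ t ∂(volume : Measure ℝ), x' t ∈ symJ '' subdiff (Ham C) (x t)

/-- The action `𝔸(x) = -½ ∫₀¹ ⟨Jẋ(t), x(t)⟩ dt` of a closed characteristic. -/
def charAction {n : ℕ} {C : Set (E2vec n)} (c : ClosedCharacteristic n C) : ℝ :=
  -(1 / 2) * ∫ t in (0 : ℝ)..1, ⟪symJ (c.x' t), c.x t⟫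

/-- The set of actions of closed characteristics on `∂C`. -/
def charActions (n : ℕ) (C : Set (E2vec n)) : Set ℝ :=
  {a | ∃ c : ClosedCharacteristic n C, charAction c = a}

/-- The EHZ capacity `c_EHZ(C) = min {𝔸(x) : x closed characteristic on ∂C}`. -/
def cEHZ (n : ℕ) (C : Set (E2vec n)) : ℝ := sInf (charActions n C)

/-- An action-minimizing closed characteristic. -/
def IsMinChar {n : ℕ} {C : Set (E2vec n)} (c : ClosedCharacteristic n C) : Prop :=
  ∀ c' : ClosedCharacteristic n C, charAction c ≤ charAction c'

/-- The `k`-th node of the closed polygonal curve in `ℝ^{2n}` associated to a billiard pair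
`(q, p)`: node `2j` is `(q_j, p_j)` and node `2j+1` is `(q_{j+1}, p_j)`. -/
def polyNode {n : ℕ} (m : ℕ) (q p : ZMod m → Evec n) (k : ℕ) : E2vec n :=
  if k % 2 = 0 then prodPt (q ((k / 2 : ℕ) : ZMod m)) (p ((k / 2 : ℕ) : ZMod m))
  else prodPt (q (((k / 2 : ℕ) : ZMod m) + 1)) (p ((k / 2 : ℕ) : ZMod m))

/-- The loop `x : ℝ → ℝ^{2n}` successively traverses (over the period `[0,1]`) the straight
segments from `(q_j, p_j)` to `(q_{j+1}, p_j)` and from `(q_{j+1}, p_j)` to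
`(q_{j+1}, p_{j+1})`; in particular it is a closed polygonal curve. -/
def TraversesBilliard {n : ℕ} (x : ℝ → E2vec n) (m : ℕ) (q p : ZMod m → Evec n) : Prop :=
  ∃ τ : ℕ → ℝ, Monotone τ ∧ τ 0 = 0 ∧ τ (2 * m) = 1 ∧
    ∀ k < 2 * m, x (τ k) = polyNode m q p k ∧ x (τ (k + 1)) = polyNode m q p (k + 1) ∧
      ∀ t ∈ Set.Icc (τ k) (τ (k + 1)),
        x t ∈ segment ℝ (polyNode m q p k) (polyNode m q p (k + 1))

/-- The closed polygonal curve `(q_{f 0}, ..., q_{f n})` selected from `q` by `f`. -/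
def selCurve {n : ℕ} (m : ℕ) (q : ZMod m → Evec n) (f : Fin (n + 1) → ZMod m) :
    ZMod (n + 1) → Evec n :=
  fun k => q (f ⟨ZMod.val k, ZMod.val_lt k⟩)

/-! Smoothness of `T` gives a single outer normal direction at each `p_j`, so equal dual points
force parallel chords of `q`; for consecutive indices this puts a vertex of `q` on the segment
joining its neighbours. Strict convexity then keeps each `p_j ∈ ∂T` off the segment joining
`p_{j-1}` and `p_{j+1}`. The normal-cone conditions are those of `(q, p)`, read in reverse. -/

theorem StrictConvex.eq_or_eq_of_mem_segment {E : Type*} [AddCommGroup E] [Module ℝ E]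
    [TopologicalSpace E] {s : Set E} (hs : StrictConvex ℝ s) {x y z : E} (hx : x ∈ s)
    (hz : z ∈ s) (hy : y ∉ interior s) (h : y ∈ segment ℝ x z) : y = x ∨ y = z := by
  rcases eq_or_ne x z with rfl | hxz
  · exact Or.inl (by simpa [segment_same] using h)
  rw [← insert_endpoints_openSegment] at h
  rcases h with rfl | rfl | h
  · exact Or.inl rfl
  · exact Or.inr rfl
  · exact absurd (hs.openSegment_subset hx hz hxz h) hy

lemma mem_segment_of_sub_eq_pos_smul {E : Type*} [AddCommGroup E] [Module ℝ E] {x y z : E}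
    {c : ℝ} (hc : 0 < c) (h : z - y = c • (y - x)) : y ∈ segment ℝ x z :=
  mem_segment_iff_sameRay.2 (h ▸ SameRay.sameRay_pos_smul_right _ hc)

lemma neg_mem_frontier_neg {E : Type*} [TopologicalSpace E] [InvolutiveNeg E]
    [ContinuousNeg E] {s : Set E} {x : E} (hx : x ∈ frontier s) : -x ∈ frontier (-s) := by
  rw [show -s = Homeomorph.neg E ⁻¹' s from rfl, ← Homeomorph.preimage_frontier]
  simpa using hx

section outerNormalCone

variable {n : ℕ} {T : Set (Evec n)}

lemma smul_mem_outerNormalCone {z u : Evec n} (hu : u ∈ outerNormalCone T z) {c : ℝ}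
    (hc : 0 ≤ c) : c • u ∈ outerNormalCone T z := fun y hy => by
  rw [inner_smul_left]
  exact mul_nonpos_of_nonneg_of_nonpos hc (hu y hy)

lemma mem_outerNormalCone_neg_iff {z u : Evec n} :
    u ∈ outerNormalCone (-T) (-z) ↔ -u ∈ outerNormalCone T z := by
  refine ⟨fun hu y hy => ?_, fun hu y hy => ?_⟩
  · simpa [inner_neg_left, ← inner_neg_right, neg_add_eq_sub] using hu (-y) (by simpa using hy)
  · simpa [inner_neg_left, ← inner_neg_right, neg_add_eq_sub, add_comm] using hu (-y) hy

lemma IsSmoothBody.exists_pos_smul_eq (hT : IsSmoothBody T) {z u v : Evec n}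
    (hz : z ∈ frontier T) (hu : u ∈ outerNormalCone T z) (hv : v ∈ outerNormalCone T z)
    (hu0 : u ≠ 0) (hv0 : v ≠ 0) : ∃ c : ℝ, 0 < c ∧ v = c • u := by
  have hunit : ‖u‖⁻¹ • u = ‖v‖⁻¹ • v :=
    hT z hz _ (smul_mem_outerNormalCone hu (by positivity))
      _ (smul_mem_outerNormalCone hv (by positivity))
      (norm_smul_inv_norm hu0) (norm_smul_inv_norm hv0)
  refine ⟨‖v‖ * ‖u‖⁻¹, by positivity, ?_⟩
  rw [mul_smul, hunit, smul_inv_smul₀ (norm_ne_zero_iff.2 hv0)]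

end outerNormalCone

namespace IsBilliardPair

variable {n m : ℕ} {K T : Set (Evec n)} {q p : ZMod m → Evec n}

lemma exists_pos_smul_of_dual_eq (hT : IsSmoothBody T) (h : IsBilliardPair K T m q p)
    {i k : ZMod m} (hik : p i = p k) :
    ∃ c : ℝ, 0 < c ∧ q (k + 1) - q k = c • (q (i + 1) - q i) := by
  obtain ⟨⟨-, hq, -⟩, -, hp, hN⟩ := h
  exact hT.exists_pos_smul_eq (hp i) (hN i).1 (hik ▸ (hN k).1)
    (sub_ne_zero.2 (hq i)) (sub_ne_zero.2 (hq k))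

lemma dual_succ_ne (hT : IsSmoothBody T) (h : IsBilliardPair K T m q p) (j : ZMod m) :
    p (j + 1) ≠ p j := by
  intro hp
  obtain ⟨c, hc, hchord⟩ := h.exists_pos_smul_of_dual_eq hT hp.symm
  have hnot := h.1.2.2 (j + 1)
  rw [add_sub_cancel_right] at hnot
  exact hnot (mem_segment_of_sub_eq_pos_smul hc hchord)

lemma isClosedPolygonal_dual (hTc : IsClosed T) (hTs : StrictConvex ℝ T)
    (hT : IsSmoothBody T) (h : IsBilliardPair K T m q p) : IsClosedPolygonal m p := by
  have hp := h.2.2.1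
  refine ⟨h.1.1, h.dual_succ_ne hT, fun j hj => ?_⟩
  rcases hTs.eq_or_eq_of_mem_segment (hTc.frontier_subset (hp _))
    (hTc.frontier_subset (hp _)) (hp j).2 hj with hprev | hnext
  · exact h.dual_succ_ne hT (j - 1) (by rwa [sub_add_cancel])
  · exact h.dual_succ_ne hT j hnext.symm

end IsBilliardPair

theorem dual_is_trajectory_general {n : ℕ} (K T : Set (Evec n))
    (hT : IsConvexBody T)
    (hTs : StrictConvex ℝ T) (hTsm : IsSmoothBody T)
    (m : ℕ) (q p : ZMod m → Evec n) (h : IsBilliardPair K T m q p) :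
    IsBilliardPair T (-K) m p (fun j => -q (j + 1)) := by
  refine ⟨h.isClosedPolygonal_dual hT.1.isClosed hTs hTsm, ?_⟩
  obtain ⟨-, hqK, hpT, hN⟩ := h
  refine ⟨hpT, fun j => neg_mem_frontier_neg (hqK (j + 1)), fun j => ⟨?_, ?_⟩⟩
  · exact mem_outerNormalCone_neg_iff.2 (hN j).2
  · simpa only [neg_sub_neg, neg_sub, add_assoc] using (hN (j + 1)).1

/-- Proposition 2.2: if `T` is strictly convex and smooth and `q` is a
closed `(K,T)`-Minkowski billiard trajectory with dual trajectory `p`, then `p` is a closed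
`(T,-K)`-Minkowski billiard trajectory with `-q^{+1} = (-q_2, ..., -q_m, -q_1)` as its closed
dual billiard trajectory on `-K`. -/
theorem dual_is_trajectory {n : ℕ} (K T : Set (Evec n))
    (hK : IsConvexBody K) (hT : IsConvexBody T)
    (hTs : StrictConvex ℝ T) (hTsm : IsSmoothBody T)
    (m : ℕ) (q p : ZMod m → Evec n) (h : IsBilliardPair K T m q p) :
    IsBilliardPair T (-K) m p (fun j => -q (j + 1)) :=
  dual_is_trajectory_general K T hT hTs hTsm m q p h
end
end

section
/- Let K, T ⊂ ℝ^n be convex bodies and let q = (q_1,...,q_m) be a closed (K,T)-Minkowski billiard trajectory with closed dual billiard trajectory p = (p_1,...,p_m). Then q cannot be translated into the interior of K and p cannot be translated into the interior of T, i.e., q ∈ F(K) and p ∈ F(T). -/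
/-!
Pairing a closed polygon with a fixed vector `v` telescopes to zero, so `⟪x_j, v⟫` cannot
strictly increase all the way around the loop. If `p_j + v ∈ int T` for every `j`, the nonzero
edge `q_{j+1} - q_j ∈ N_T(p_j)` strictly separates `p_j + v` from `p_j`, i.e. `⟪q_j, v⟫`
strictly decreases at every step. If `q_j + v ∈ int K` for every `j`, the normals
`-(p_{j+1} - p_j) ∈ N_K(q_{j+1})` make `⟪p_j, v⟫` weakly increasing, hence constant, and strictly
increasing wherever `p` moves; so `p` is a single point, and translating it to `0 ∈ int T`
contradicts the first case.
-/

open scoped RealInnerProductSpace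
open MeasureTheory Filter Metric

noncomputable section

open Topology

theorem inner_neg_of_mem_outerNormalCone {n : ℕ} {C : Set (Evec n)} {x u z : Evec n}
    (hu : u ∈ outerNormalCone C x) (hu0 : u ≠ 0) (hz : z ∈ interior C) :
    ⟪u, z - x⟫ < 0 := by
  have hline : Tendsto (fun t : ℝ => z + t • u) (𝓝[>] 0) (𝓝 z) := by
    have hcont : Continuous fun t : ℝ => z + t • u := by fun_prop
    simpa using (hcont.tendsto 0).mono_left nhdsWithin_le_nhds
  obtain ⟨t, ht, htpos⟩ :=
    ((hline.eventually (mem_interior_iff_mem_nhds.mp hz)).and self_mem_nhdsWithin).exists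
  have hle := hu _ ht
  rw [show z + t • u - x = (z - x) + t • u by abel, inner_add_right, real_inner_smul_right,
    real_inner_self_eq_norm_sq] at hle
  have : 0 < t * ‖u‖ ^ 2 := mul_pos htpos (by positivity)
  linarith

theorem ZMod.apply_add_one_eq_of_le_apply_add_one {m : ℕ} [NeZero m] {α : Type*}
    [AddCommGroup α] [PartialOrder α] [IsOrderedAddMonoid α] {g : ZMod m → α}
    (hg : ∀ j, g j ≤ g (j + 1)) (j : ZMod m) : g (j + 1) = g j := by
  have hshift : ∑ i, g (i + 1) = ∑ i, g i := Fintype.sum_equiv (Equiv.addRight 1) _ _ fun _ => rfl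
  have htele : ∑ i, (g (i + 1) - g i) = 0 := by rw [Finset.sum_sub_distrib, hshift, sub_self]
  exact sub_eq_zero.mp <| (Finset.sum_eq_zero_iff_of_nonneg fun i _ => sub_nonneg.mpr (hg i)).mp
    htele j (Finset.mem_univ j)

theorem ZMod.apply_eq_apply_zero_of_apply_add_one_eq {m : ℕ} [NeZero m] {α : Type*}
    {f : ZMod m → α} (hf : ∀ j, f (j + 1) = f j) (j : ZMod m) : f j = f 0 := by
  obtain ⟨k, rfl⟩ := ZMod.natCast_zmod_surjective j
  induction k with
  | zero => simp
  | succ k ih => rw [Nat.cast_succ, hf, ih]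

section BilliardPair

variable {n m : ℕ} [NeZero m] {K T : Set (Evec n)} {q p : ZMod m → Evec n}

theorem exists_add_notMem_interior_of_edges_mem_outerNormalCone
    (hq : ∀ j, q (j + 1) ≠ q j) (hN : ∀ j, q (j + 1) - q j ∈ outerNormalCone T (p j))
    (v : Evec n) : ∃ j, p j + v ∉ interior T := by
  by_contra! hv
  have hlt : ∀ j, ⟪q (j + 1) - q j, v⟫ < 0 := fun j => by
    simpa using inner_neg_of_mem_outerNormalCone (hN j) (sub_ne_zero.mpr (hq j)) (hv j)
  have hmono : ∀ j, -⟪q j, v⟫ ≤ -⟪q (j + 1), v⟫ := fun j => by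
    have := hlt j
    rw [inner_sub_left] at this
    linarith
  have h0 := ZMod.apply_add_one_eq_of_le_apply_add_one hmono 0
  have := hlt 0
  rw [inner_sub_left] at this
  linarith

theorem apply_add_one_eq_of_add_mem_interior
    (hN : ∀ j, -(p (j + 1) - p j) ∈ outerNormalCone K (q (j + 1)))
    {v : Evec n} (hv : ∀ j, q j + v ∈ interior K) (j : ZMod m) : p (j + 1) = p j := by
  have hmono : ∀ i, ⟪p i, v⟫ ≤ ⟪p (i + 1), v⟫ := fun i => by
    have := hN i _ (interior_subset (hv (i + 1)))
    rw [add_sub_cancel_left, inner_neg_left, inner_sub_left] at this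
    linarith
  by_contra hne
  have hlt := inner_neg_of_mem_outerNormalCone (hN j) (neg_ne_zero.mpr (sub_ne_zero.mpr hne))
    (hv (j + 1))
  rw [add_sub_cancel_left, inner_neg_left, inner_sub_left] at hlt
  have := ZMod.apply_add_one_eq_of_le_apply_add_one hmono j
  linarith

end BilliardPair

theorem trajectory_not_translatable_general {n : ℕ} (K T : Set (Evec n))
    (hT : IsConvexBody T)
    (m : ℕ) (q p : ZMod m → Evec n) (h : IsBilliardPair K T m q p) :
    (∀ v : Evec n, ∃ j, q j + v ∉ interior K) ∧
    (∀ v : Evec n, ∃ j, p j + v ∉ interior T) := by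
  obtain ⟨⟨hm, hq, -⟩, -, -, hN⟩ := h
  have : NeZero m := ⟨by omega⟩
  have hdual := exists_add_notMem_interior_of_edges_mem_outerNormalCone hq fun j => (hN j).1
  refine ⟨fun v => ?_, hdual⟩
  by_contra! hv
  have hp := ZMod.apply_eq_apply_zero_of_apply_add_one_eq
    (apply_add_one_eq_of_add_mem_interior (fun j => (hN j).2) hv)
  obtain ⟨j, hj⟩ := hdual (-p 0)
  exact hj (by simpa [hp j] using hT.2.2)

/-- Proposition 2.3: if `q` is a closed `(K,T)`-Minkowski billiard
trajectory with dual trajectory `p`, then `q` cannot be translated into the interior of `K`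
and `p` cannot be translated into the interior of `T`. -/
theorem trajectory_not_translatable {n : ℕ} (K T : Set (Evec n))
    (hK : IsConvexBody K) (hT : IsConvexBody T)
    (m : ℕ) (q p : ZMod m → Evec n) (h : IsBilliardPair K T m q p) :
    (∀ v : Evec n, ∃ j, q j + v ∉ interior K) ∧
    (∀ v : Evec n, ∃ j, p j + v ∉ interior T) :=
  trajectory_not_translatable_general K T hT m q p h
end
end

section
/- Let K, T ⊂ ℝ^n be convex bodies. Then every closed strong (K,T)-Minkowski billiard trajectory is a closed weak (K,T)-Minkowski billiard trajectory; and if T is additionally strictly convex, then every closed weak (K,T)-Minkowski billiard trajectory is a closed strong (K,T)-Minkowski billiard trajectory. -/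
/-!
For a convex body `T`, the gauge of `T°` is the support function `h(v) = max_{p ∈ T} ⟪v, p⟫`,
attained exactly at the `p` with `v ∈ N_T(p)`.

Strong ⇒ weak: if `p_{j-1}, p_j` are the dual points, then
`h(q̄ - q_{j-1}) + h(q_{j+1} - q̄) ≥ ⟪q̄ - q_{j-1}, p_{j-1}⟫ + ⟪q_{j+1} - q̄, p_j⟫`,
with equality at `q̄ = q_j`, and the right side exceeds its value at `q_j` by
`⟪p_{j-1} - p_j, q̄ - q_j⟫`. So `q_j` minimizes on the hyperplane through `q_j` normal to
`p_{j-1} - p_j ∈ N_K(q_j)` (on any supporting hyperplane if `p_{j-1} = p_j`).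

Weak ⇒ strong: let `p_j` maximize `⟪q_{j+1} - q_j, ·⟫` on `T`. By strict convexity it is unique,
hence depends continuously on the direction, so `h` has gradient `p_j` at `q_{j+1} - q_j`. The
first-order condition for the minimization on `H_j` makes `p_{j-1} - p_j` normal to `H_j`; its
orientation is outward because `⟪q_j - q_{j-1}, p_{j-1} - p_j⟫ ≥ 0`, and when this vanishes
uniqueness gives `p_{j-1} = p_j`.
-/

open scoped RealInnerProductSpace
open MeasureTheory Filter Metric

noncomputable section

/-- A closed weak `(K,T)`-Minkowski billiard trajectory: a closed polygonal curve on `∂K`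
such that each vertex `q_j` minimizes `μ_{T°}(q̄ - q_{j-1}) + μ_{T°}(q_{j+1} - q̄)` over all
`q̄` in some `K`-supporting hyperplane `H_j` through `q_j`. -/
def IsWeakTrajectory {n : ℕ} (K T : Set (Evec n)) (m : ℕ) (q : ZMod m → Evec n) : Prop :=
  IsClosedPolygonal m q ∧ (∀ j, q j ∈ frontier K) ∧
    ∀ j, ∃ u : Evec n, u ≠ 0 ∧ (∀ y ∈ K, ⟪u, y⟫ ≤ ⟪u, q j⟫) ∧
      ∀ y : Evec n, ⟪u, y⟫ = ⟪u, q j⟫ →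
        gauge (polarSet T) (q j - q (j - 1)) + gauge (polarSet T) (q (j + 1) - q j) ≤
          gauge (polarSet T) (y - q (j - 1)) + gauge (polarSet T) (q (j + 1) - y)

open Topology

section InnerMaximizer

variable {E : Type*} [NormedAddCommGroup E] [InnerProductSpace ℝ E] {T : Set E} {v p p' : E}

theorem eq_zero_of_isMaxOn_inner_of_mem_interior (hmax : IsMaxOn (inner ℝ v) T p)
    (hp : p ∈ interior T) : v = 0 := by
  have h := (hmax.isLocalMax (mem_interior_iff_mem_nhds.1 hp)).hasFDerivAt_eq_zero
    (innerSL ℝ v).hasFDerivAt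
  simpa using congrArg (fun f => f v) h

theorem mem_frontier_of_isMaxOn_inner (hT : IsClosed T) (hv : v ≠ 0) (hp : p ∈ T)
    (hmax : IsMaxOn (inner ℝ v) T p) : p ∈ frontier T := by
  rw [hT.frontier_eq]
  exact ⟨hp, fun hint => hv (eq_zero_of_isMaxOn_inner_of_mem_interior hmax hint)⟩

theorem StrictConvex.eq_of_isMaxOn_inner (hS : StrictConvex ℝ T) (hv : v ≠ 0) (hp : p ∈ T)
    (hp' : p' ∈ T) (hmax : IsMaxOn (inner ℝ v) T p) (hmax' : IsMaxOn (inner ℝ v) T p') :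
    p = p' := by
  by_contra hne
  have heq : ⟪v, p'⟫ = ⟪v, p⟫ := le_antisymm (isMaxOn_iff.1 hmax p' hp') (isMaxOn_iff.1 hmax' p hp)
  have hmid : IsMaxOn (inner ℝ v) T ((1 / 2 : ℝ) • p + (1 / 2 : ℝ) • p') :=
    isMaxOn_iff.2 fun y hy => by
      have := isMaxOn_iff.1 hmax y hy
      simp only [inner_add_right, real_inner_smul_right, heq]
      linarith
  exact hv (eq_zero_of_isMaxOn_inner_of_mem_interior hmid
    (hS hp hp' hne (by norm_num) (by norm_num) (by norm_num)))

theorem StrictConvex.tendsto_of_isMaxOn_inner (hTc : IsCompact T) (hS : StrictConvex ℝ T)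
    (hv : v ≠ 0) (hp : p ∈ T) (hmax : IsMaxOn (inner ℝ v) T p) {ι : Type*} {l : Filter ι}
    {w a : ι → E} (hw : Tendsto w l (𝓝 v)) (ha : ∀ i, a i ∈ T)
    (hamax : ∀ i, IsMaxOn (inner ℝ (w i)) T (a i)) : Tendsto a l (𝓝 p) := by
  refine hTc.tendsto_nhds_of_unique_mapClusterPt (Eventually.of_forall ha) fun x hx hcl => ?_
  obtain ⟨U, hUl, hUx⟩ := mapClusterPt_iff_ultrafilter.1 hcl
  have hwU := hw.mono_left hUl
  refine hS.eq_of_isMaxOn_inner hv hx hp (fun y hy => ?_) hmax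
  exact le_of_tendsto_of_tendsto' (hwU.inner tendsto_const_nhds) (hwU.inner hUx)
    fun i => isMaxOn_iff.1 (hamax i) y hy

theorem Convex.exists_isMaxOn_inner_of_notMem_interior [CompleteSpace E] {K : Set E} {x : E}
    (hK : Convex ℝ K) (hint : (interior K).Nonempty) (hx : x ∉ interior K) :
    ∃ u : E, u ≠ 0 ∧ IsMaxOn (inner ℝ u) K x := by
  obtain ⟨f, hf⟩ := geometric_hahn_banach_open_point hK.interior isOpen_interior hx
  have hu : ∀ y, ⟪(InnerProductSpace.toDual ℝ E).symm f, y⟫ = f y := fun y =>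
    InnerProductSpace.toDual_symm_apply
  obtain ⟨a, ha⟩ := hint
  refine ⟨(InnerProductSpace.toDual ℝ E).symm f, fun h0 => ?_, fun y hy => ?_⟩
  · have := hf a ha
    rw [← hu, ← hu, h0, inner_zero_left, inner_zero_left] at this
    exact lt_irrefl _ this
  · have hy' : y ∈ closure (interior K) := by
      rw [hK.closure_interior_eq_closure_of_nonempty_interior ⟨a, ha⟩]
      exact subset_closure hy
    have hle : closure (interior K) ⊆ {z | f z ≤ f x} :=
      closure_minimal (fun z hz => (hf z hz).le) (isClosed_le f.continuous continuous_const)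
    simpa only [hu] using hle hy'

theorem exists_eq_smul_of_forall_inner_eq_zero {u g : E} (h : ∀ w, ⟪u, w⟫ = 0 → ⟪w, g⟫ = 0) :
    ∃ c : ℝ, g = c • u := by
  have hg : g ∈ (ℝ ∙ u)ᗮᗮ := by
    rw [Submodule.mem_orthogonal]
    intro w hw
    exact h w (Submodule.mem_orthogonal_singleton_iff_inner_right.1 hw)
  rw [Submodule.orthogonal_orthogonal, Submodule.mem_span_singleton] at hg
  obtain ⟨c, hc⟩ := hg
  exact ⟨c, hc.symm⟩

end InnerMaximizer

section SupportFunction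

variable {n : ℕ} {T : Set (Evec n)} {v w p : Evec n}

theorem mem_outerNormalCone_iff_isMaxOn : v ∈ outerNormalCone T p ↔ IsMaxOn (inner ℝ v) T p := by
  simp only [outerNormalCone, isMaxOn_iff, inner_sub_right, sub_nonpos]
  rfl

theorem polarSet_mem_nhds_zero (hT : Bornology.IsBounded T) : polarSet T ∈ 𝓝 0 := by
  obtain ⟨R, hR0, hR⟩ := hT.exists_pos_norm_le
  refine Filter.mem_of_superset (ball_mem_nhds 0 (inv_pos.2 hR0)) fun x hx y hy => ?_
  rw [mem_ball_zero_iff] at hx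
  calc ⟪x, y⟫ ≤ ‖x‖ * ‖y‖ := real_inner_le_norm x y
    _ ≤ R⁻¹ * R := mul_le_mul hx.le (hR y hy) (norm_nonneg y) (inv_pos.2 hR0).le
    _ = 1 := inv_mul_cancel₀ hR0.ne'

theorem inner_le_gauge_polarSet (hT : Bornology.IsBounded T) (hp : p ∈ T) (v : Evec n) :
    ⟪v, p⟫ ≤ gauge (polarSet T) v := by
  by_contra! h
  obtain ⟨b, hb0, hbv, x, hx, rfl⟩ :=
    exists_lt_of_gauge_lt (absorbent_nhds_zero (polarSet_mem_nhds_zero hT)) h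
  rw [real_inner_smul_left] at hbv
  nlinarith [hx p hp]

theorem gauge_polarSet_le_of_isMaxOn (h0 : 0 ∈ T) (hmax : IsMaxOn (inner ℝ v) T p) :
    gauge (polarSet T) v ≤ ⟪v, p⟫ := by
  have hp0 : 0 ≤ ⟪v, p⟫ := by simpa using isMaxOn_iff.1 hmax 0 h0
  refine le_of_forall_pos_le_add fun ε hε => gauge_le_of_mem (by positivity) ?_
  rw [Set.mem_smul_set_iff_inv_smul_mem₀ (by positivity)]
  intro y hy
  rw [real_inner_smul_left, inv_mul_le_iff₀ (by positivity)]
  linarith [isMaxOn_iff.1 hmax y hy]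

theorem gauge_polarSet_eq_of_isMaxOn (hT : Bornology.IsBounded T) (h0 : 0 ∈ T) (hp : p ∈ T)
    (hmax : IsMaxOn (inner ℝ v) T p) : gauge (polarSet T) v = ⟪v, p⟫ :=
  (gauge_polarSet_le_of_isMaxOn h0 hmax).antisymm (inner_le_gauge_polarSet hT hp v)

theorem gauge_polarSet_add_le_of_isMaxOn (hT : Bornology.IsBounded T) (h0 : 0 ∈ T) (hp : p ∈ T)
    (hmax : IsMaxOn (inner ℝ (v + w)) T p) :
    gauge (polarSet T) (v + w) ≤ gauge (polarSet T) v + ⟪w, p⟫ := by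
  rw [gauge_polarSet_eq_of_isMaxOn hT h0 hp hmax, inner_add_left]
  linarith [inner_le_gauge_polarSet hT hp v]

end SupportFunction

namespace IsConvexBody

variable {n : ℕ} {T : Set (Evec n)}

theorem zero_mem (hT : IsConvexBody T) : (0 : Evec n) ∈ T :=
  interior_subset hT.2.2

theorem mem_of_mem_frontier (hT : IsConvexBody T) {p : Evec n} (hp : p ∈ frontier T) : p ∈ T :=
  hT.1.isClosed.frontier_subset hp

theorem exists_isMaxOn_inner (hT : IsConvexBody T) (v : Evec n) :
    ∃ p ∈ T, IsMaxOn (inner ℝ v) T p :=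
  hT.1.exists_isMaxOn ⟨0, hT.zero_mem⟩ (innerSL ℝ v).continuous.continuousOn

end IsConvexBody

section Reflection

variable {n : ℕ} {K T : Set (Evec n)} {a b c pa pb : Evec n}

def IsWeakReflection (K T : Set (Evec n)) (a b c : Evec n) : Prop :=
  ∃ u : Evec n, u ≠ 0 ∧ IsMaxOn (inner ℝ u) K b ∧ ∀ y : Evec n, ⟪u, y⟫ = ⟪u, b⟫ →
    gauge (polarSet T) (b - a) + gauge (polarSet T) (c - b) ≤
      gauge (polarSet T) (y - a) + gauge (polarSet T) (c - y)

theorem isWeakTrajectory_iff {m : ℕ} {q : ZMod m → Evec n} :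
    IsWeakTrajectory K T m q ↔ IsClosedPolygonal m q ∧ (∀ j, q j ∈ frontier K) ∧
      ∀ j, IsWeakReflection K T (q (j - 1)) (q j) (q (j + 1)) :=
  Iff.rfl

theorem isWeakReflection_of_sub_mem_outerNormalCone (hK : IsConvexBody K) (hT : IsConvexBody T)
    (hb : b ∈ frontier K) (hpa : pa ∈ T) (hpb : pb ∈ T) (hmaxa : IsMaxOn (inner ℝ (b - a)) T pa)
    (hmaxb : IsMaxOn (inner ℝ (c - b)) T pb) (hN : pa - pb ∈ outerNormalCone K b) :
    IsWeakReflection K T a b c := by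
  have hmin : ∀ y, ⟪pa - pb, y⟫ = ⟪pa - pb, b⟫ →
      gauge (polarSet T) (b - a) + gauge (polarSet T) (c - b) ≤
        gauge (polarSet T) (y - a) + gauge (polarSet T) (c - y) := by
    intro y hy
    rw [gauge_polarSet_eq_of_isMaxOn hT.1.isBounded hT.zero_mem hpa hmaxa,
      gauge_polarSet_eq_of_isMaxOn hT.1.isBounded hT.zero_mem hpb hmaxb]
    have ha := inner_le_gauge_polarSet hT.1.isBounded hpa (y - a)
    have hc := inner_le_gauge_polarSet hT.1.isBounded hpb (c - y)
    simp only [inner_sub_left, inner_sub_right, real_inner_comm pa, real_inner_comm pb]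
      at hy ha hc ⊢
    linarith
  by_cases hp : pa - pb = 0
  · obtain ⟨u, hu, hsupp⟩ := hK.2.1.exists_isMaxOn_inner_of_notMem_interior ⟨0, hK.2.2⟩ hb.2
    exact ⟨u, hu, hsupp, fun y _ => hmin y (by rw [hp, inner_zero_left, inner_zero_left])⟩
  · exact ⟨pa - pb, hp, mem_outerNormalCone_iff_isMaxOn.1 hN, hmin⟩

theorem inner_nonneg_of_forall_gauge_polarSet_le (hT : IsConvexBody T) (hS : StrictConvex ℝ T)
    (hab : b ≠ a) (hbc : c ≠ b) (hpa : pa ∈ T) (hpb : pb ∈ T)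
    (hmaxa : IsMaxOn (inner ℝ (b - a)) T pa) (hmaxb : IsMaxOn (inner ℝ (c - b)) T pb) {u : Evec n}
    (hmin : ∀ y : Evec n, ⟪u, y⟫ = ⟪u, b⟫ →
      gauge (polarSet T) (b - a) + gauge (polarSet T) (c - b) ≤
        gauge (polarSet T) (y - a) + gauge (polarSet T) (c - y))
    {w : Evec n} (hw : ⟪u, w⟫ = 0) : 0 ≤ ⟪w, pa - pb⟫ := by
  choose α hαT hαmax using fun t : ℝ => hT.exists_isMaxOn_inner (b - a + t • w)
  choose β hβT hβmax using fun t : ℝ => hT.exists_isMaxOn_inner (c - b + t • -w)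
  have hline : ∀ v w' : Evec n, Tendsto (fun t : ℝ => v + t • w') (𝓝[>] 0) (𝓝 v) := fun v w' =>
    tendsto_nhdsWithin_of_tendsto_nhds
      ((continuous_const.add (continuous_id.smul continuous_const)).tendsto' 0 v (by simp))
  have hα := hS.tendsto_of_isMaxOn_inner hT.1 (sub_ne_zero.2 hab) hpa hmaxa (hline _ _) hαT hαmax
  have hβ := hS.tendsto_of_isMaxOn_inner hT.1 (sub_ne_zero.2 hbc) hpb hmaxb (hline _ _) hβT hβmax
  -- `α t` and `β t` are subgradients of the support function at the two edges of the curve moved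
  -- to `b + t • w`, so minimality at `b` gives `0 ≤ t * ⟪w, α t - β t⟫`.
  refine ge_of_tendsto (tendsto_const_nhds.inner (hα.sub hβ))
    (eventually_nhdsWithin_of_forall fun t (ht : 0 < t) => ?_)
  have h1 := gauge_polarSet_add_le_of_isMaxOn hT.1.isBounded hT.zero_mem (hαT t) (hαmax t)
  have h2 := gauge_polarSet_add_le_of_isMaxOn hT.1.isBounded hT.zero_mem (hβT t) (hβmax t)
  have hbw : ⟪u, b + t • w⟫ = ⟪u, b⟫ := by
    rw [inner_add_right, real_inner_smul_right, hw, mul_zero, add_zero]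
  have h3 := hmin _ hbw
  rw [show b + t • w - a = b - a + t • w by abel,
    show c - (b + t • w) = c - b + t • -w by rw [smul_neg]; abel] at h3
  simp only [real_inner_smul_left, inner_neg_left] at h1 h2
  rw [inner_sub_right]
  exact (mul_nonneg_iff_of_pos_left ht).1 (by linarith)

theorem IsWeakReflection.sub_mem_outerNormalCone (hw : IsWeakReflection K T a b c)
    (hT : IsConvexBody T) (hS : StrictConvex ℝ T) (ha : a ∈ K) (hab : b ≠ a) (hbc : c ≠ b)
    (hpa : pa ∈ T) (hpb : pb ∈ T) (hmaxa : IsMaxOn (inner ℝ (b - a)) T pa)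
    (hmaxb : IsMaxOn (inner ℝ (c - b)) T pb) : pa - pb ∈ outerNormalCone K b := by
  obtain ⟨u, -, hsupp, hmin⟩ := hw
  have hfirst : ∀ w, ⟪u, w⟫ = 0 → 0 ≤ ⟪w, pa - pb⟫ := fun w hw =>
    inner_nonneg_of_forall_gauge_polarSet_le hT hS hab hbc hpa hpb hmaxa hmaxb hmin hw
  have horth : ∀ w, ⟪u, w⟫ = 0 → ⟪w, pa - pb⟫ = 0 := fun w hw =>
    le_antisymm (by simpa using hfirst (-w) (by simp [hw])) (hfirst w hw)
  obtain ⟨s, hs⟩ := exists_eq_smul_of_forall_inner_eq_zero horth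
  have hua : 0 ≤ ⟪u, b - a⟫ := by
    rw [inner_sub_right]
    linarith [isMaxOn_iff.1 hsupp a ha]
  have hga : 0 ≤ ⟪b - a, pa - pb⟫ := by
    rw [inner_sub_right]
    linarith [isMaxOn_iff.1 hmaxa pb hpb]
  rw [mem_outerNormalCone_iff_isMaxOn]
  rcases hga.lt_or_eq with hpos | hzero
  · rw [hs, real_inner_smul_right, real_inner_comm] at hpos
    refine isMaxOn_iff.2 fun y hy => ?_
    rw [hs, real_inner_smul_left, real_inner_smul_left]
    exact mul_le_mul_of_nonneg_left (isMaxOn_iff.1 hsupp y hy) (pos_of_mul_pos_left hpos hua).le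
  · have hmaxb' : IsMaxOn (inner ℝ (b - a)) T pb := isMaxOn_iff.2 fun y hy => by
      rw [inner_sub_right] at hzero
      linarith [isMaxOn_iff.1 hmaxa y hy]
    rw [hS.eq_of_isMaxOn_inner (sub_ne_zero.2 hab) hpa hpb hmaxa hmaxb', sub_self]
    exact isMaxOn_iff.2 fun y _ => by simp

end Reflection

/-- Theorem 1.3 of [KruppRudolf2022]: every closed strong
`(K,T)`-Minkowski billiard trajectory is a weak one, and if `T` is strictly convex then
every closed weak `(K,T)`-Minkowski billiard trajectory is a strong one. -/
theorem strong_weak_trajectories {n : ℕ} (K T : Set (Evec n))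
    (hK : IsConvexBody K) (hT : IsConvexBody T) :
    (∀ (m : ℕ) (q : ZMod m → Evec n), IsClosedTrajectory K T m q → IsWeakTrajectory K T m q) ∧
    (StrictConvex ℝ T →
      ∀ (m : ℕ) (q : ZMod m → Evec n), IsWeakTrajectory K T m q → IsClosedTrajectory K T m q) := by
  constructor
  · rintro m q ⟨p, hpoly, hqK, hpT, hbounce⟩
    have hmax : ∀ j, IsMaxOn (inner ℝ (q (j + 1) - q j)) T (p j) := fun j =>
      mem_outerNormalCone_iff_isMaxOn.1 (hbounce j).1
    refine isWeakTrajectory_iff.2 ⟨hpoly, hqK, fun j => ?_⟩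
    have hN := (hbounce (j - 1)).2
    rw [sub_add_cancel, neg_sub] at hN
    refine isWeakReflection_of_sub_mem_outerNormalCone hK hT (hqK j)
      (hT.mem_of_mem_frontier (hpT (j - 1))) (hT.mem_of_mem_frontier (hpT j)) ?_ (hmax j) hN
    simpa only [sub_add_cancel] using hmax (j - 1)
  · intro hS m q hq
    obtain ⟨hpoly, hqK, hweak⟩ := isWeakTrajectory_iff.1 hq
    choose p hpT hpmax using fun j : ZMod m => hT.exists_isMaxOn_inner (q (j + 1) - q j)
    refine ⟨p, hpoly, hqK, fun j => mem_frontier_of_isMaxOn_inner hT.1.isClosed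
      (sub_ne_zero.2 (hpoly.2.1 j)) (hpT j) (hpmax j), fun j => ⟨?_, ?_⟩⟩
    · exact mem_outerNormalCone_iff_isMaxOn.2 (hpmax j)
    · have hw := hweak (j + 1)
      rw [add_sub_cancel_right] at hw
      rw [neg_sub]
      exact hw.sub_mem_outerNormalCone hT hS (hK.mem_of_mem_frontier (hqK j)) (hpoly.2.1 j)
        (hpoly.2.1 (j + 1)) (hpT j) (hpT (j + 1)) (hpmax j) (hpmax (j + 1))
end
end
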